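/- (Deterministic ellipsoid collision check.) Let B and C be n×n real symmetric positive definite matrices and let b, c ∈ ℝⁿ with (b − c)ᵀ C (b − c) > 1 (b lies strictly outside E₂). Consider the solid ellipsoids E₁ = {x : (x − b)ᵀ B (x − b) ≤ 1} and E₂ = {x : (x − c)ᵀ C (x − c) ≤ 1}. Set C̃ = B^{1/2} C^{-1} B^{1/2}, let c̃ be the unique solution of (B^{-1/2}(B^{-1/2} C B^{-1/2})^{1/2}) c̃ = c − b, let M₁ be the 2n×2n block matrix [C̃, −I_n; −c̃c̃ᵀ, C̃], and suppose λ ∈ ℝ is a real eigenvalue of M₁ whose real part is minimal among the real parts of all complex eigenvalues of M₁, with λ < 0. Set A = (λI_n − C̃)² and y = c − b. Then E₁ ∩ E₂ ≠ ∅ if and only if yᵀ B^{1/2} A^{-1} B^{1/2} y ≤ 1/λ². -/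

import Mathlib

open Matrix

open scoped ComplexOrder in
/-- The square root of a positive semidefinite matrix, as `Matrix.PosSemidef.sqrt` was defined
in Mathlib of December 2024 (since removed from Mathlib). -/
noncomputable def Matrix.PosSemidef.sqrt {n 𝕜 : Type*} [Fintype n] [RCLike 𝕜] [DecidableEq n]
    {A : Matrix n n 𝕜} (hA : A.PosSemidef) : Matrix n n 𝕜 :=
  hA.1.eigenvectorUnitary.1 * diagonal ((↑) ∘ (√·) ∘ hA.1.eigenvalues) *
    (star hA.1.eigenvectorUnitary : Matrix n n 𝕜)

/-!
In the coordinates `z = B^{1/2}(x - b)` the ellipsoid `E₁` is the unit ball and `E₂` is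
`{z | |Q(z - w)| ≤ 1}` with `w = B^{1/2} y = Q c̃` and `Q² = C̃⁻¹`. A Schur complement and the
matrix determinant lemma turn `det(λ - M₁) = 0` into `c̃ᵀ (λ - C̃)⁻² c̃ = 1`. With `μ = -λ > 0`
and `r = (1 + μQ²)⁻¹ w` this says `|Q r| = 1`: the point `z₀ = w - r = μ Q² r` lies on the
boundary of `E₂` with outer normal `-Q² r`, so it is the point of `E₂` nearest to the origin
(expand `0 ≤ |z - z₀|²`). Hence the ball meets `E₂` iff `|z₀| ≤ 1`, and
`|z₀|² = λ² yᵀ B^{1/2} (λ - C̃)⁻² B^{1/2} y`.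
-/

open scoped ComplexOrder in
theorem Matrix.PosSemidef.sqrt_mul_self {n 𝕜 : Type*} [Fintype n] [RCLike 𝕜] [DecidableEq n]
    {A : Matrix n n 𝕜} (hA : A.PosSemidef) : hA.sqrt * hA.sqrt = A := by
  conv_rhs => rw [hA.1.spectral_theorem, Unitary.conjStarAlgAut_apply]
  set U : Matrix n n 𝕜 := (hA.1.eigenvectorUnitary : Matrix n n 𝕜)
  set D : Matrix n n 𝕜 := diagonal ((↑) ∘ (√·) ∘ hA.1.eigenvalues)
  have hU : star U * U = 1 := Unitary.coe_star_mul_self _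
  have hD : D * D = diagonal (RCLike.ofReal ∘ hA.1.eigenvalues) := by
    rw [diagonal_mul_diagonal]
    congr 1
    funext i
    simp only [Function.comp_apply, ← RCLike.ofReal_mul,
      Real.mul_self_sqrt (hA.eigenvalues_nonneg i)]
  calc hA.sqrt * hA.sqrt = U * (D * (star U * U) * D) * star U := by
        simp only [Matrix.PosSemidef.sqrt, U, D, Matrix.mul_assoc]
    _ = _ := by rw [hU, Matrix.mul_one, hD]

open scoped ComplexOrder in
theorem Matrix.PosSemidef.posSemidef_sqrt {n 𝕜 : Type*} [Fintype n] [RCLike 𝕜] [DecidableEq n]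
    {A : Matrix n n 𝕜} (hA : A.PosSemidef) : hA.sqrt.PosSemidef := by
  rw [Matrix.PosSemidef.sqrt, Unitary.isUnit_coe.posSemidef_star_right_conjugate_iff,
    posSemidef_diagonal_iff]
  exact fun i => RCLike.ofReal_nonneg.mpr (Real.sqrt_nonneg _)

namespace Matrix

variable {ι : Type*} [Fintype ι]

theorem dotProduct_transpose_mul_self_mulVec {κ : Type*} [Fintype κ] (P : Matrix κ ι ℝ)
    (x : ι → ℝ) : x ⬝ᵥ ((Pᵀ * P) *ᵥ x) = (P *ᵥ x) ⬝ᵥ (P *ᵥ x) := by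
  rw [← mulVec_mulVec, dotProduct_mulVec, vecMul_transpose]

variable [DecidableEq ι]

theorem apply_mem_spectrum_map_iff {K L : Type*} [Field K] [Field L] (f : K →+* L)
    (M : Matrix ι ι K) (l : K) : f l ∈ spectrum L (M.map f) ↔ l ∈ spectrum K M := by
  rw [mem_spectrum_iff_isRoot_charpoly, mem_spectrum_iff_isRoot_charpoly, charpoly_map,
    Polynomial.isRoot_map_iff f.injective]

section CommRing

variable {R : Type*} [CommRing R]

theorem det_sub_vecMulVec {A : Matrix ι ι R} (hA : IsUnit A.det) (u v : ι → R) :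
    (A - vecMulVec u v).det = A.det * (1 - v ⬝ᵥ (A⁻¹ *ᵥ u)) := by
  have h := det_add_replicateCol_mul_replicateRow (ι := Unit) hA (-u) v
  rw [← vecMulVec_eq, neg_vecMulVec, ← sub_eq_add_neg] at h
  rw [h, det_unique (1 + _), add_apply, one_apply_eq, Matrix.mul_assoc, ← replicateCol_mulVec,
    replicateRow_mul_replicateCol_apply, mulVec_neg, dotProduct_neg, ← sub_eq_add_neg]

theorem det_fromBlocks_one₁₂ {N : Matrix ι ι R} (hN : IsUnit N.det) (W : Matrix ι ι R) :
    (fromBlocks N 1 W N).det = (N * N - W).det := by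
  have := N.invertibleOfIsUnitDet hN
  rw [det_fromBlocks₁₁, invOf_eq_nonsing_inv, Matrix.mul_one, mul_comm, ← det_mul,
    Matrix.sub_mul, Matrix.mul_assoc, nonsing_inv_mul _ hN, Matrix.mul_one]

theorem smul_one_sub_mul_eq_neg_one {T P : Matrix ι ι R} (hTP : T * P = 1) (l : R)
    (hH : IsUnit (1 - l • P).det) : (l • 1 - T) * (P * (1 - l • P)⁻¹) = -1 := by
  have hNP : (l • 1 - T) * P = -(1 - l • P) := by
    rw [Matrix.sub_mul, hTP, smul_mul_assoc, Matrix.one_mul, neg_sub]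
  rw [← Matrix.mul_assoc, hNP, Matrix.neg_mul, mul_nonsing_inv _ hH]

end CommRing

theorem dotProduct_inv_mulVec_eq_one_of_mem_spectrum {K : Type*} [Field K] {T : Matrix ι ι K}
    {u v : ι → K} {l : K} (hl : l ∈ spectrum K (fromBlocks T (-1) (-vecMulVec u v) T))
    (hN : IsUnit (l • 1 - T).det) : v ⬝ᵥ (((l • 1 - T) ^ 2)⁻¹ *ᵥ u) = 1 := by
  have hblocks : l • 1 - fromBlocks T (-1) (-vecMulVec u v) T
      = fromBlocks (l • 1 - T) 1 (vecMulVec u v) (l • 1 - T) := by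
    rw [← fromBlocks_one, fromBlocks_smul, sub_eq_add_neg, fromBlocks_neg, fromBlocks_add]
    simp [sub_eq_add_neg]
  have hNN : IsUnit ((l • 1 - T) ^ 2).det := by rw [det_pow]; exact hN.pow 2
  rw [spectrum.mem_iff, Algebra.algebraMap_eq_smul_one, isUnit_iff_isUnit_det, hblocks,
    det_fromBlocks_one₁₂ hN, ← sq, det_sub_vecMulVec hNN, isUnit_iff_ne_zero, not_not,
    mul_eq_zero, sub_eq_zero] at hl
  exact (hl.resolve_left hNN.ne_zero).symm

theorem isUnit_det_one_sub_smul_transpose_mul_self {κ : Type*} [Fintype κ] {l : ℝ} (hl : l ≤ 0)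
    (Q : Matrix κ ι ℝ) : IsUnit (1 - l • (Qᵀ * Q)).det := by
  have hpos : (1 + (-l) • (Qᵀ * Q)).PosDef := PosDef.one.add_posSemidef
    ((by simpa using posSemidef_conjTranspose_mul_self Q : (Qᵀ * Q).PosSemidef).smul
      (neg_nonneg.mpr hl))
  rw [neg_smul, ← sub_eq_add_neg] at hpos
  exact (isUnit_iff_isUnit_det _).mp hpos.isUnit

end Matrix

open Matrix

variable {ι : Type*} [Fintype ι]

theorem exists_mem_ball_inter_ellipsoid_iff {κ : Type*} [Fintype κ]
    {Q : Matrix κ ι ℝ} {μ : ℝ} (hμ : 0 ≤ μ) {r w : ι → ℝ}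
    (hw : w = r + μ • ((Qᵀ * Q) *ᵥ r)) (hr : (Q *ᵥ r) ⬝ᵥ (Q *ᵥ r) = 1) :
    (∃ z, z ⬝ᵥ z ≤ 1 ∧ (Q *ᵥ (z - w)) ⬝ᵥ (Q *ᵥ (z - w)) ≤ 1) ↔
      μ ^ 2 * (((Qᵀ * Q) *ᵥ r) ⬝ᵥ ((Qᵀ * Q) *ᵥ r)) ≤ 1 := by
  have hp : ∀ x, ((Qᵀ * Q) *ᵥ r) ⬝ᵥ x = (Q *ᵥ r) ⬝ᵥ (Q *ᵥ x) := fun x => by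
    rw [dotProduct_comm, ← mulVec_mulVec, dotProduct_mulVec, vecMul_transpose,
      dotProduct_comm]
  set p := (Qᵀ * Q) *ᵥ r
  constructor
  · rintro ⟨z, hz, hzw⟩
    -- `2 ⟨a, b⟩ ≥ -(|a|² + |b|²)` with `a = Q r`, `b = Q (z - w)`
    have hcross : -1 ≤ p ⬝ᵥ (z - w) := by
      have := dotProduct_star_self_nonneg (Q *ᵥ r + Q *ᵥ (z - w))
      simp only [star_trivial, add_dotProduct, dotProduct_add, dotProduct_comm (Q *ᵥ (z - w)),
        hr] at this
      rw [hp]; linarith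
    have hpw : p ⬝ᵥ w = 1 + μ * (p ⬝ᵥ p) := by
      rw [hw, dotProduct_add, dotProduct_smul, hp, hr, smul_eq_mul]
    have hpz : μ * (p ⬝ᵥ p) ≤ p ⬝ᵥ z := by
      have : p ⬝ᵥ z = p ⬝ᵥ (z - w) + p ⬝ᵥ w := by rw [← dotProduct_add, sub_add_cancel]
      linarith
    have hsq := dotProduct_star_self_nonneg (z - μ • p)
    simp only [star_trivial, sub_dotProduct, dotProduct_sub, smul_dotProduct, dotProduct_smul,
      smul_eq_mul, dotProduct_comm z p] at hsq
    nlinarith [mul_le_mul_of_nonneg_left hpz hμ]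
  · intro h
    refine ⟨μ • p, ?_, ?_⟩
    · simpa only [smul_dotProduct, dotProduct_smul, smul_eq_mul, ← mul_assoc, ← sq] using h
    · rw [hw, sub_add_cancel_right, mulVec_neg, neg_dotProduct_neg, hr]

variable [DecidableEq ι]

theorem exists_mem_inter_ellipsoids_iff {B C S Q : Matrix ι ι ℝ} (hS : IsUnit S.det)
    (hB : Sᵀ * S = B) (hC : (Q * S)ᵀ * (Q * S) = C) (b c : ι → ℝ) :
    (∃ x, (x - b) ⬝ᵥ (B *ᵥ (x - b)) ≤ 1 ∧ (x - c) ⬝ᵥ (C *ᵥ (x - c)) ≤ 1) ↔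
      ∃ z, z ⬝ᵥ z ≤ 1 ∧ (Q *ᵥ (z - S *ᵥ (c - b))) ⬝ᵥ (Q *ᵥ (z - S *ᵥ (c - b))) ≤ 1 := by
  subst hB hC
  have hshift : ∀ x, S *ᵥ (x - c) = S *ᵥ (x - b) - S *ᵥ (c - b) := fun x => by
    rw [← mulVec_sub, sub_sub_sub_cancel_right]
  simp only [dotProduct_transpose_mul_self_mulVec]
  simp only [← mulVec_mulVec, hshift]
  constructor
  · rintro ⟨x, hx⟩
    exact ⟨_, hx⟩
  · rintro ⟨z, hz⟩
    refine ⟨b + S⁻¹ *ᵥ z, ?_⟩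
    rwa [add_sub_cancel_left, mulVec_mulVec, mul_nonsing_inv _ hS, one_mulVec]

theorem exists_mem_ball_inter_ellipsoid_iff_of_mem_spectrum {Q T : Matrix ι ι ℝ} (hQ : Qᵀ = Q)
    (hTQ : T * (Qᵀ * Q) = 1) {u : ι → ℝ} {l : ℝ}
    (hl : l ∈ spectrum ℝ (fromBlocks T (-1) (-vecMulVec u u) T)) (hl0 : l < 0) :
    (∃ z, z ⬝ᵥ z ≤ 1 ∧ (Q *ᵥ (z - Q *ᵥ u)) ⬝ᵥ (Q *ᵥ (z - Q *ᵥ u)) ≤ 1) ↔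
      (Q *ᵥ u) ⬝ᵥ (((l • 1 - T) ^ 2)⁻¹ *ᵥ (Q *ᵥ u)) ≤ 1 / l ^ 2 := by
  set P := Qᵀ * Q with hP
  set H := 1 - l • P
  have hH : IsUnit H.det := isUnit_det_one_sub_smul_transpose_mul_self hl0.le Q
  have hHQ : H * Q = Q * H := by
    simp only [H, P, hQ, Matrix.sub_mul, Matrix.mul_sub, Matrix.one_mul, Matrix.mul_one,
      smul_mul_assoc, mul_smul_comm, Matrix.mul_assoc]
  set N := l • (1 : Matrix ι ι ℝ) - T
  have hNinv : N * -(P * H⁻¹) = 1 := by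
    rw [Matrix.mul_neg, smul_one_sub_mul_eq_neg_one hTQ l hH, neg_neg]
  have hN : IsUnit N.det := isUnit_det_of_right_inverse hNinv
  replace hNinv : N⁻¹ = -(P * H⁻¹) := inv_eq_right_inv hNinv
  have hT : Tᵀ = T := by
    rw [← inv_eq_left_inv hTQ, transpose_nonsing_inv, hP, transpose_mul, transpose_transpose]
  have hNN : (N ^ 2)⁻¹ = (N⁻¹)ᵀ * N⁻¹ := by
    rw [transpose_nonsing_inv, transpose_sub, transpose_smul, transpose_one, hT, sq,
      Matrix.mul_inv_rev]
  obtain ⟨r, hr_def⟩ : ∃ r, r = Q *ᵥ (H⁻¹ *ᵥ u) := ⟨_, rfl⟩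
  have hHr : H *ᵥ r = Q *ᵥ u := by
    rw [hr_def, mulVec_mulVec, mulVec_mulVec, hHQ, Matrix.mul_assoc, mul_nonsing_inv _ hH,
      Matrix.mul_one]
  have hw : Q *ᵥ u = r + (-l) • (P *ᵥ r) := by
    rw [← hHr, sub_mulVec, one_mulVec, smul_mulVec, neg_smul, sub_eq_add_neg]
  have hr : (Q *ᵥ r) ⬝ᵥ (Q *ᵥ r) = 1 := by
    have hQr : Q *ᵥ r = -(N⁻¹ *ᵥ u) := by
      rw [hNinv, neg_mulVec, neg_neg, hr_def, mulVec_mulVec, mulVec_mulVec, hP, hQ]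
    rw [hQr, neg_dotProduct_neg, ← dotProduct_transpose_mul_self_mulVec, ← hNN]
    exact dotProduct_inv_mulVec_eq_one_of_mem_spectrum hl hN
  have htarget : (Q *ᵥ u) ⬝ᵥ ((N ^ 2)⁻¹ *ᵥ (Q *ᵥ u)) = (P *ᵥ r) ⬝ᵥ (P *ᵥ r) := by
    rw [hNN, dotProduct_transpose_mul_self_mulVec, ← hHr,
      mulVec_mulVec, hNinv, Matrix.neg_mul, Matrix.mul_assoc, nonsing_inv_mul _ hH,
      Matrix.mul_one, neg_mulVec, neg_dotProduct_neg]
  rw [htarget, le_div_iff₀ (sq_pos_of_neg hl0),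
    exists_mem_ball_inter_ellipsoid_iff (neg_nonneg.mpr hl0.le) hw hr, neg_sq, mul_comm]

theorem stmt_10_general {n : ℕ} {B C : Matrix (Fin n) (Fin n) ℝ}
    (hB : B.PosDef) (hC : C.PosDef) {b c : Fin n → ℝ}
    (E₁ E₂ : Set (Fin n → ℝ))
    (hE₁ : E₁ = {x | (x - b) ⬝ᵥ (B *ᵥ (x - b)) ≤ 1})
    (hE₂ : E₂ = {x | (x - c) ⬝ᵥ (C *ᵥ (x - c)) ≤ 1})
    (Q : Matrix (Fin n) (Fin n) ℝ) (hQspd : Q.PosDef)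
    (hQsq : Q ^ 2 = (hB.posSemidef.sqrt)⁻¹ * C * (hB.posSemidef.sqrt)⁻¹)
    (Ct : Matrix (Fin n) (Fin n) ℝ)
    (hCt : Ct = hB.posSemidef.sqrt * C⁻¹ * hB.posSemidef.sqrt)
    (ct : Fin n → ℝ)
    (hct : ((hB.posSemidef.sqrt)⁻¹ * Q) *ᵥ ct = c - b)
    (M₁ : Matrix (Fin n ⊕ Fin n) (Fin n ⊕ Fin n) ℝ)
    (hM₁ : M₁ = Matrix.fromBlocks Ct (-1) (-(Matrix.vecMulVec ct ct)) Ct)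
    {l : ℝ}
    (hlmem : (l : ℂ) ∈ spectrum ℂ (M₁.map Complex.ofReal))
    (hlneg : l < 0)
    (A : Matrix (Fin n) (Fin n) ℝ)
    (hA : A = (l • (1 : Matrix (Fin n) (Fin n) ℝ) - Ct) ^ 2)
    (y : Fin n → ℝ) (hy : y = c - b) :
    (E₁ ∩ E₂).Nonempty ↔
      y ⬝ᵥ ((hB.posSemidef.sqrt * A⁻¹ * hB.posSemidef.sqrt) *ᵥ y) ≤ 1 / l ^ 2 := by
  set S := hB.posSemidef.sqrt
  have hSsymm : Sᵀ = S := (by simpa using hB.posSemidef.posSemidef_sqrt.isHermitian : S.IsSymm).eq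
  have hSS : Sᵀ * S = B := by rw [hSsymm]; exact hB.posSemidef.sqrt_mul_self
  have hSdet : IsUnit S.det :=
    (isUnit_iff_isUnit_det S).mp (isUnit_of_mul_isUnit_right (hSS ▸ hB.isUnit))
  have hQsymm : Qᵀ = Q := (by simpa using hQspd.isHermitian : Q.IsSymm).eq
  have hQQ : Qᵀ * Q = S⁻¹ * C * S⁻¹ := by rw [hQsymm, ← sq, hQsq]
  have hCQS : (Q * S)ᵀ * (Q * S) = C := by
    rw [transpose_mul, hSsymm, Matrix.mul_assoc, ← Matrix.mul_assoc Qᵀ, hQQ]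
    simp only [Matrix.mul_assoc, nonsing_inv_mul _ hSdet, Matrix.mul_one,
      mul_nonsing_inv_cancel_left _ _ hSdet]
  have hCtQQ : Ct * (Qᵀ * Q) = 1 := by
    rw [hCt, hQQ]
    simp only [Matrix.mul_assoc, mul_nonsing_inv_cancel_left _ _ hSdet,
      nonsing_inv_mul_cancel_left _ _ ((isUnit_iff_isUnit_det C).mp hC.isUnit),
      mul_nonsing_inv _ hSdet]
  have hSy : S *ᵥ y = Q *ᵥ ct := by
    rw [hy, ← hct, mulVec_mulVec, mul_nonsing_inv_cancel_left _ _ hSdet]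
  have hSAS : y ⬝ᵥ ((S * A⁻¹ * S) *ᵥ y) = (S *ᵥ y) ⬝ᵥ (A⁻¹ *ᵥ (S *ᵥ y)) := by
    rw [← mulVec_mulVec, ← mulVec_mulVec, dotProduct_mulVec, ← mulVec_transpose, hSsymm]
  rw [hE₁, hE₂, hSAS, hA]
  refine (exists_mem_inter_ellipsoids_iff hSdet hSS hCQS b c).trans ?_
  rw [← hy, hSy]
  exact exists_mem_ball_inter_ellipsoid_iff_of_mem_spectrum hQsymm hCtQQ
    (hM₁ ▸ (apply_mem_spectrum_map_iff Complex.ofRealHom M₁ l).mp hlmem) hlneg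

/-- Deterministic ellipsoid collision check. With `B, C` SPD, `b` strictly outside `E₂`
(`(b-c)ᵀC(b-c) > 1`), `C̃ = B^{1/2} C⁻¹ B^{1/2}`, `c̃` the solution of
`(B^{-1/2}(B^{-1/2}CB^{-1/2})^{1/2}) c̃ = c - b`, `M₁ = [C̃, -I; -c̃c̃ᵀ, C̃]`, `l` a real
eigenvalue of `M₁` of minimal real part with `l < 0`, `A = (l•I - C̃)²` and `y = c - b`:
`E₁ ∩ E₂ ≠ ∅ ↔ yᵀ B^{1/2} A⁻¹ B^{1/2} y ≤ 1/l²`. -/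
theorem stmt_10 {n : ℕ} {B C : Matrix (Fin n) (Fin n) ℝ}
    (hB : B.PosDef) (hC : C.PosDef) {b c : Fin n → ℝ}
    (houtside : (b - c) ⬝ᵥ (C *ᵥ (b - c)) > 1)
    (E₁ E₂ : Set (Fin n → ℝ))
    (hE₁ : E₁ = {x | (x - b) ⬝ᵥ (B *ᵥ (x - b)) ≤ 1})
    (hE₂ : E₂ = {x | (x - c) ⬝ᵥ (C *ᵥ (x - c)) ≤ 1})
    (Q : Matrix (Fin n) (Fin n) ℝ) (hQspd : Q.PosDef)
    (hQsq : Q ^ 2 = (hB.posSemidef.sqrt)⁻¹ * C * (hB.posSemidef.sqrt)⁻¹)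
    (Ct : Matrix (Fin n) (Fin n) ℝ)
    (hCt : Ct = hB.posSemidef.sqrt * C⁻¹ * hB.posSemidef.sqrt)
    (ct : Fin n → ℝ)
    (hct : ((hB.posSemidef.sqrt)⁻¹ * Q) *ᵥ ct = c - b)
    (M₁ : Matrix (Fin n ⊕ Fin n) (Fin n ⊕ Fin n) ℝ)
    (hM₁ : M₁ = Matrix.fromBlocks Ct (-1) (-(Matrix.vecMulVec ct ct)) Ct)
    {l : ℝ}
    (hlmem : (l : ℂ) ∈ spectrum ℂ (M₁.map Complex.ofReal))
    (hlmin : ∀ z ∈ spectrum ℂ (M₁.map Complex.ofReal), l ≤ z.re)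
    (hlneg : l < 0)
    (A : Matrix (Fin n) (Fin n) ℝ)
    (hA : A = (l • (1 : Matrix (Fin n) (Fin n) ℝ) - Ct) ^ 2)
    (y : Fin n → ℝ) (hy : y = c - b) :
    (E₁ ∩ E₂).Nonempty ↔
      y ⬝ᵥ ((hB.posSemidef.sqrt * A⁻¹ * hB.posSemidef.sqrt) *ᵥ y) ≤ 1 / l ^ 2 :=
  stmt_10_general hB hC E₁ E₂ hE₁ hE₂ Q hQspd hQsq Ct hCt ct hct M₁ hM₁ hlmem hlneg A hA y hy
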